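/- arXiv:1710.07836 — 2 statements merged into one kernel-verified Lean document; each statement's English description precedes it below -/
import Mathlib

section
/- Let N be a rooted phylogenetic network on X with vertex set V. If the bipartite graph G_N has a matching of size |V| - |X|, then N has a rooted spanning tree with the same root as N whose set of leaves is exactly contained in X (i.e., N is tree-based). -/
open Relation

/-- Out-degree of a vertex in a digraph given by its arc relation. -/
noncomputable def outDeg {V : Type*} (A : V → V → Prop) (v : V) : ℕ := {u | A v u}.ncard
/-- In-degree of a vertex in a digraph given by its arc relation. -/
noncomputable def inDeg {V : Type*} (A : V → V → Prop) (v : V) : ℕ := {u | A u v}.ncard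

/-- A rooted phylogenetic network on leaf set `X`. -/
structure PhyloNet (V : Type*) [Fintype V] [DecidableEq V] where
  Arc : V → V → Prop
  root : V
  X : Finset V
  acyclic : ∀ v, ¬ Relation.TransGen Arc v v
  reach : ∀ v, Relation.ReflTransGen Arc root v
  root_out : 1 ≤ outDeg Arc root
  leaf_iff : ∀ v, v ∈ X ↔ outDeg Arc v = 0
  leaf_in : ∀ v ∈ X, inDeg Arc v = 1
  internal : ∀ v, v ≠ root → v ∉ X →
    (inDeg Arc v = 1 ∧ 2 ≤ outDeg Arc v) ∨ (2 ≤ inDeg Arc v ∧ outDeg Arc v = 1)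

section Defs
variable {V : Type*} [Fintype V] [DecidableEq V]

/-- A reticulation: in-degree at least two. -/
def IsRetic (N : PhyloNet V) (v : V) : Prop := 2 ≤ inDeg N.Arc v
/-- A tree vertex: a non-leaf vertex of in-degree at most one. -/
def IsTreeVert (N : PhyloNet V) (v : V) : Prop := v ∉ N.X ∧ inDeg N.Arc v ≤ 1
/-- An omnian: a non-leaf vertex all of whose children are reticulations. -/
def IsOmnian (N : PhyloNet V) (v : V) : Prop := v ∉ N.X ∧ ∀ u, N.Arc v u → IsRetic N u
/-- A binary network: all in- and out-degrees are at most two. -/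
def IsBinary (N : PhyloNet V) : Prop := ∀ v : V, inDeg N.Arc v ≤ 2 ∧ outDeg N.Arc v ≤ 2

/-- A rooted spanning tree of `N` with the same root as `N`. -/
def IsRSTree (N : PhyloNet V) (T : V → V → Prop) : Prop :=
  (∀ u v, T u v → N.Arc u v) ∧ (∀ v, inDeg T v = 0 ↔ v = N.root) ∧
  (∀ v, v ≠ N.root → inDeg T v = 1)

/-- A support tree: a rooted spanning tree with the same root, all of whose leaves are in `X`. -/
def IsSupportTree (N : PhyloNet V) (T : V → V → Prop) : Prop :=
  IsRSTree N T ∧ ∀ v, outDeg T v = 0 → v ∈ N.X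

/-- Tree-based network. -/
def TreeBased (N : PhyloNet V) : Prop := ∃ T, IsSupportTree N T

/-- A (nonempty, repetition-free) directed path recorded as a list of vertices. -/
def IsPathIn (A : V → V → Prop) (p : List V) : Prop := p ≠ [] ∧ p.Chain' A ∧ p.Nodup
/-- The path ends at a vertex of `X`. -/
def EndsIn (X : Finset V) (p : List V) : Prop := ∃ x ∈ X, p.getLast? = some x
/-- Pairwise vertex-disjoint family of paths. -/
def PairwiseDisj (P : Finset (List V)) : Prop :=
  ∀ p ∈ P, ∀ q ∈ P, p ≠ q → ∀ v : V, v ∈ p → v ∉ q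
/-- A partition of the vertex set of `N` into vertex-disjoint directed paths
ending at leaves in `X`. -/
def IsPathPartition (N : PhyloNet V) (P : Finset (List V)) : Prop :=
  (∀ p ∈ P, IsPathIn N.Arc p ∧ EndsIn N.X p) ∧ PairwiseDisj P ∧ ∀ v : V, ∃ p ∈ P, v ∈ p

/-- A matching in the bipartite graph with edge set `E` (edges from a first copy of `V`
to a second copy of `V`), recorded as a set of edges no two of which share an endpoint. -/
def IsMatchingOn (E : V → V → Prop) (M : Finset (V × V)) : Prop :=
  (∀ e ∈ M, E e.1 e.2) ∧ ∀ e ∈ M, ∀ f ∈ M, (e.1 = f.1 ∨ e.2 = f.2) → e = f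

/-- Size of a maximum matching of the bipartite graph with edge set `E`. -/
noncomputable def maxMatching (E : V → V → Prop) : ℕ :=
  sSup {n | ∃ M : Finset (V × V), IsMatchingOn E M ∧ M.card = n}

/-- An antichain of vertices of `N`. -/
def AntichainIn (N : PhyloNet V) (S : Finset V) : Prop :=
  ∀ u ∈ S, ∀ v ∈ S, u ≠ v → ¬ Relation.TransGen N.Arc u v

/-- The antichain-to-leaf property: from every antichain there are pairwise
vertex-disjoint directed paths to leaves, one starting at each antichain element. -/
def AntichainToLeaf (N : PhyloNet V) : Prop :=
  ∀ S : Finset V, AntichainIn N S →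
    ∃ f : V → List V,
      (∀ s ∈ S, IsPathIn N.Arc (f s) ∧ (f s).head? = some s ∧ EndsIn N.X (f s)) ∧
      ∀ s ∈ S, ∀ t ∈ S, s ≠ t → ∀ v : V, v ∈ f s → v ∉ f t

/-- A temporal network: a real labelling strictly increasing along tree arcs and
constant along reticulation arcs. -/
def Temporal (N : PhyloNet V) : Prop :=
  ∃ l : V → ℝ, ∀ u v, N.Arc u v →
    (IsRetic N v → l u = l v) ∧ (¬ IsRetic N v → l u < l v)

/-- `N'` is a binary refinement of `N`, witnessed by the contraction map `φ`:
`N` is obtained from the binary network `N'` by contracting the arcs whose endpoints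
are identified by `φ`. -/
def IsBinRefinement {V' : Type*} [Fintype V'] [DecidableEq V']
    (N' : PhyloNet V') (N : PhyloNet V) (φ : V' → V) : Prop :=
  IsBinary N' ∧ Function.Surjective φ ∧ φ N'.root = N.root ∧
  N'.X.image φ = N.X ∧ Set.InjOn φ ↑N'.X ∧
  (∀ u v : V, N.Arc u v ↔ ∃ u' v', φ u' = u ∧ φ v' = v ∧ N'.Arc u' v' ∧ φ u' ≠ φ v') ∧
  (∀ a b : V', φ a = φ b →
    Relation.ReflTransGen (fun x y => (N'.Arc x y ∨ N'.Arc y x) ∧ φ x = φ y) a b)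

/-- Edge of the bipartite graph `B_N` between omnians and reticulations. -/
def BEdge (N : PhyloNet V) (o r : V) : Prop := IsOmnian N o ∧ IsRetic N r ∧ N.Arc o r
/-- Edge of the bipartite graph `Z_N` between tree vertices with a reticulation child
and reticulations. -/
def ZEdge (N : PhyloNet V) (t r : V) : Prop :=
  IsTreeVert N t ∧ (∃ r', N.Arc t r' ∧ IsRetic N r') ∧ IsRetic N r ∧ N.Arc t r

/-- `R_t`: reticulations with no reticulation parent. -/
def Rt (N : PhyloNet V) (v : V) : Prop := IsRetic N v ∧ ∀ u, N.Arc u v → ¬ IsRetic N u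
/-- `Q_t`: vertices with a child in `R_t`. -/
def Qt (N : PhyloNet V) (v : V) : Prop := ∃ r, N.Arc v r ∧ Rt N r
/-- Edge of the bipartite graph `J_N`. -/
def JEdge (N : PhyloNet V) (q r : V) : Prop := Qt N q ∧ Rt N r ∧ N.Arc q r

/-- A supporting set for `J_N`. -/
def IsSupportingSet (N : PhyloNet V) (E : Finset (V × V)) : Prop :=
  (∀ e ∈ E, JEdge N e.1 e.2) ∧
  (∀ q, Qt N q → IsOmnian N q → ∃ e ∈ E, e.1 = q) ∧
  (∀ r, Rt N r → ∃! e : V × V, e ∈ E ∧ e.2 = r)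

/-- An arboreal arc: `u` is a reticulation, or `v` is a tree vertex or a leaf. -/
def ArborealArc (N : PhyloNet V) (u v : V) : Prop :=
  N.Arc u v ∧ (IsRetic N u ∨ ¬ IsRetic N v)

/-- The number of support trees of `N`, identified with their arc sets. -/
noncomputable def supCount (N : PhyloNet V) : ℕ :=
  {A' : Finset (V × V) | IsSupportTree N (fun u v => (u, v) ∈ A')}.ncard

/-- The bipartite graph `J_N`, as a simple graph on `Q_t ∪ R_t`. -/
def Jgraph (N : PhyloNet V) : SimpleGraph {v : V // Qt N v ∨ Rt N v} where
  Adj a b := JEdge N a.1 b.1 ∨ JEdge N b.1 a.1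
  symm := ⟨by intro a b h; tauto⟩
  loopless := by
    constructor
    rintro a (⟨_, _, h⟩ | ⟨_, _, h⟩) <;> exact N.acyclic _ (Relation.TransGen.single h)

/-- Degree in `J_N`. -/
noncomputable def Jdeg (N : PhyloNet V) (a : {v : V // Qt N v ∨ Rt N v}) : ℕ :=
  ((Jgraph N).neighborSet a).ncard

end Defs

/-- A rooted tree (equivalently, a subdivision of a rooted tree): a rooted digraph
in which every non-root vertex has in-degree one and everything is reachable
from the root. -/
structure RootedDirTree (V : Type*) [Fintype V] [DecidableEq V] where
  Arc : V → V → Prop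
  root : V
  acyclic : ∀ v, ¬ Relation.TransGen Arc v v
  reach : ∀ v, Relation.ReflTransGen Arc root v
  root_in : inDeg Arc root = 0
  in_one : ∀ v, v ≠ root → inDeg Arc v = 1
/-!
Extend `M` to a spanning tree: keep the matched arcs and give each remaining non-root vertex
an arbitrary parent. Every non-root vertex then has exactly one tree parent. A vertex that is
matched on the left keeps its matched child, so tree leaves are unmatched on the left. Leaves
of `N` have no out-arcs, so all `|X|` of them are unmatched on the left; since the matching
leaves exactly `|V| - |M| = |X|` vertices unmatched there, these are all of them.
-/

open Finset

section Degree
variable {V : Type*} [Finite V] {A : V → V → Prop} {v : V}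

lemma inDeg_eq_zero_iff : inDeg A v = 0 ↔ ∀ u, ¬ A u v := by
  rw [inDeg, Set.ncard_eq_zero (Set.toFinite _), Set.eq_empty_iff_forall_notMem]
  rfl

lemma outDeg_eq_zero_iff : outDeg A v = 0 ↔ ∀ u, ¬ A v u := by
  rw [outDeg, Set.ncard_eq_zero (Set.toFinite _), Set.eq_empty_iff_forall_notMem]
  rfl

end Degree

lemma IsMatchingOn.card_image_fst {V : Type*} [DecidableEq V] {E : V → V → Prop}
    {M : Finset (V × V)} (hM : IsMatchingOn E M) : (M.image Prod.fst).card = M.card :=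
  card_image_of_injOn fun e he f hf hef => hM.2 e he f hf (Or.inl hef)

namespace PhyloNet
variable {V : Type*} [Fintype V] [DecidableEq V] (N : PhyloNet V)

lemma not_arc_root (u : V) : ¬ N.Arc u N.root :=
  fun h => N.acyclic N.root (.tail' (N.reach u) h)

lemma exists_arc_of_ne_root {v : V} (hv : v ≠ N.root) : ∃ u, N.Arc u v := by
  rcases (N.reach v).cases_tail with h | ⟨u, -, hu⟩
  · exact absurd h hv
  · exact ⟨u, hu⟩

noncomputable def parent (v : V) : V :=
  if h : v = N.root then v else (N.exists_arc_of_ne_root h).choose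

lemma arc_parent {v : V} (hv : v ≠ N.root) : N.Arc (N.parent v) v := by
  rw [parent, dif_neg hv]
  exact (N.exists_arc_of_ne_root hv).choose_spec

def treeOfMatching (M : Finset (V × V)) (u v : V) : Prop :=
  (u, v) ∈ M ∨ (v ≠ N.root ∧ (∀ w, (w, v) ∉ M) ∧ u = N.parent v)

variable {N} {M : Finset (V × V)}

lemma exists_setOf_treeOfMatching_eq_singleton (hM : IsMatchingOn N.Arc M) {v : V}
    (hv : v ≠ N.root) : ∃ w, {u | N.treeOfMatching M u v} = {w} := by
  by_cases hmatched : ∃ w, (w, v) ∈ M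
  · obtain ⟨w, hw⟩ := hmatched
    refine ⟨w, Set.ext fun u => ⟨?_, fun hu => Or.inl (hu ▸ hw)⟩⟩
    rintro (hu | ⟨-, hunmatched, -⟩)
    · exact congrArg Prod.fst (hM.2 _ hu _ hw (Or.inr rfl))
    · exact absurd hw (hunmatched w)
  · simp only [not_exists] at hmatched
    refine ⟨N.parent v, Set.ext fun u => ⟨?_, fun hu => Or.inr ⟨hv, hmatched, hu⟩⟩⟩
    rintro (hu | ⟨-, -, rfl⟩)
    · exact absurd hu (hmatched u)
    · rfl

lemma isRSTree_treeOfMatching (hM : IsMatchingOn N.Arc M) :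
    IsRSTree N (N.treeOfMatching M) := by
  have inDeg_eq_one {v : V} (hv : v ≠ N.root) : inDeg (N.treeOfMatching M) v = 1 := by
    obtain ⟨w, hw⟩ := exists_setOf_treeOfMatching_eq_singleton hM hv
    rw [inDeg, hw, Set.ncard_singleton]
  refine ⟨?_, fun v => ⟨fun h => ?_, ?_⟩, fun v => inDeg_eq_one⟩
  · rintro u v (huv | ⟨hv, -, rfl⟩)
    · exact hM.1 _ huv
    · exact N.arc_parent hv
  · by_contra hv
    have := inDeg_eq_one hv
    omega
  · rintro rfl
    refine inDeg_eq_zero_iff.mpr fun u => ?_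
    rintro (hu | ⟨hroot, -⟩)
    · exact N.not_arc_root u (hM.1 _ hu)
    · exact hroot rfl

lemma X_eq_compl_image_fst (hM : IsMatchingOn N.Arc M)
    (hc : M.card = Fintype.card V - N.X.card) : N.X = (M.image Prod.fst)ᶜ := by
  have hX_sub : N.X ⊆ (M.image Prod.fst)ᶜ := by
    intro v hv
    rw [mem_compl, mem_image]
    rintro ⟨⟨_, u⟩, hvu, rfl⟩
    exact outDeg_eq_zero_iff.mp ((N.leaf_iff _).mp hv) u (hM.1 _ hvu)
  refine eq_of_subset_of_card_le hX_sub ?_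
  rw [card_compl, hM.card_image_fst, hc, Nat.sub_sub_self (card_le_univ _)]

end PhyloNet

/-- a matching of size `|V| - |X|` in `G_N` implies `N` is tree-based. -/
theorem stmt2 {V : Type*} [Fintype V] [DecidableEq V]
    (N : PhyloNet V) (M : Finset (V × V)) (hM : IsMatchingOn N.Arc M)
    (hc : M.card = Fintype.card V - N.X.card) :
    TreeBased N := by
  refine ⟨N.treeOfMatching M, PhyloNet.isRSTree_treeOfMatching hM, fun v hv => ?_⟩
  rw [PhyloNet.X_eq_compl_image_fst hM hc, mem_compl, mem_image]
  rintro ⟨⟨_, u⟩, hvu, rfl⟩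
  exact outDeg_eq_zero_iff.mp hv u (Or.inl hvu)
end

section
/- There exists a tree-based rooted phylogenetic network N that has a binary refinement which is not tree-based. -/
open Relation

/-! A reticulation with four parents can be resolved into two reticulations with two parents
each, both feeding into a third reticulation. The coarse network is tree-based: one parent of
the big reticulation keeps the arc to it and the other three reach leaves directly. In the
refinement the two new reticulations have the same single child, so a support tree, in which
every vertex outside `X` needs a child and every vertex at most one parent, cannot exist. -/

section General

variable {V : Type*}

lemma acyclic_of_arc_lt [Preorder V] (A : V → V → Prop) (hA : ∀ u v, A u v → u < v)
    (v : V) : ¬ TransGen A v v := fun h =>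
  lt_irrefl v (transGen_minimal (r' := (· < ·)) hA v v h)

lemma reflTransGen_of_arc_lt [Preorder V] [WellFoundedLT V] (A : V → V → Prop) (root : V)
    (hA : ∀ u v, A u v → u < v) (hparent : ∀ v, v ≠ root → ∃ u, A u v) (v : V) :
    ReflTransGen A root v := by
  induction v using WellFoundedLT.induction with
  | _ v ih =>
    by_cases hv : v = root
    · exact hv ▸ ReflTransGen.refl
    · obtain ⟨u, hu⟩ := hparent v hv
      exact (ih u (hA u v hu)).tail hu

lemma reflTransGen_of_hub_eq {r : V → V → Prop} (hub : V → V)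
    (h : ∀ a, a = hub a ∨ r a (hub a) ∧ r (hub a) a) {a b : V} (hab : hub a = hub b) :
    ReflTransGen r a b := by
  have to_hub : ∀ a, ReflTransGen r a (hub a) := fun a => by
    rcases h a with ha | ⟨ha, -⟩
    · exact ha ▸ ReflTransGen.refl
    · exact ReflTransGen.single ha
  have from_hub : ∀ a, ReflTransGen r (hub a) a := fun a => by
    rcases h a with ha | ⟨-, ha⟩
    · exact ha ▸ ReflTransGen.refl
    · exact ReflTransGen.single ha
  exact (to_hub a).trans (hab ▸ from_hub b)

variable [Fintype V]

lemma outDeg_eq_card (A : V → V → Prop) [DecidableRel A] (v : V) :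
    outDeg A v = (Finset.univ.filter (A v)).card := by
  rw [outDeg, ← Set.ncard_coe_finset]
  simp

lemma inDeg_eq_card (A : V → V → Prop) [DecidableRel A] (v : V) :
    inDeg A v = (Finset.univ.filter (A · v)).card := by
  rw [inDeg, ← Set.ncard_coe_finset]
  simp

variable [DecidableEq V]

lemma IsRSTree.eq_of_arc {N : PhyloNet V} {T : V → V → Prop} (hT : IsRSTree N T)
    {u w v : V} (hu : T u v) (hw : T w v) : u = w := by
  have hdeg : inDeg T v ≤ 1 := by
    by_cases hv : v = N.root
    · exact ((hT.2.1 v).2 hv).le.trans zero_le_one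
    · exact (hT.2.2 v hv).le
  exact (Set.ncard_le_one (Set.toFinite _)).1 hdeg u hu w hw

lemma IsSupportTree.exists_arc {N : PhyloNet V} {T : V → V → Prop} (hT : IsSupportTree N T)
    {v : V} (hv : v ∉ N.X) : ∃ u, T v u :=
  Set.nonempty_of_ncard_ne_zero fun h => hv (hT.2 v h)

lemma not_treeBased_of_common_only_child (N : PhyloNet V) {u w v : V} (huw : u ≠ w)
    (hu : u ∉ N.X) (hw : w ∉ N.X) (hu_child : ∀ x, N.Arc u x → x = v)
    (hw_child : ∀ x, N.Arc w x → x = v) : ¬ TreeBased N := by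
  rintro ⟨T, hT⟩
  obtain ⟨x, hux⟩ := hT.exists_arc hu
  obtain ⟨y, hwy⟩ := hT.exists_arc hw
  obtain rfl := hu_child x (hT.1.1 _ _ hux)
  obtain rfl := hw_child y (hT.1.1 _ _ hwy)
  exact huw (hT.1.eq_of_arc hux hwy)

end General

section Example

def quadReticArcs : List (Fin 13 × Fin 13) :=
  [(0,1),(0,2),(1,3),(1,4),(2,5),(2,6),(3,7),(3,8),(4,7),(4,9),
   (5,7),(5,10),(6,7),(6,11),(7,12)]

/-- Vertex 7 of `quadReticArcs` is split into 7 (parents 3, 4) and 8 (parents 5, 6),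
both with the single child 9; the leaves are renumbered 10–14. -/
def splitReticArcs : List (Fin 15 × Fin 15) :=
  [(0,1),(0,2),(1,3),(1,4),(2,5),(2,6),(3,7),(3,10),(4,7),(4,11),
   (5,8),(5,12),(6,8),(6,13),(7,9),(8,9),(9,14)]

def QuadReticArc (u v : Fin 13) : Prop := (u, v) ∈ quadReticArcs

def SplitReticArc (u v : Fin 15) : Prop := (u, v) ∈ splitReticArcs

instance : DecidableRel QuadReticArc := fun u v => by unfold QuadReticArc; infer_instance

instance : DecidableRel SplitReticArc := fun u v => by unfold SplitReticArc; infer_instance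

def quadReticNet : PhyloNet (Fin 13) where
  Arc := QuadReticArc
  root := 0
  X := {8, 9, 10, 11, 12}
  acyclic := acyclic_of_arc_lt _ (by decide)
  reach := reflTransGen_of_arc_lt _ _ (by decide) (by decide)
  root_out := by rw [outDeg_eq_card]; decide
  leaf_iff := by simp only [outDeg_eq_card]; decide
  leaf_in := by simp only [inDeg_eq_card]; decide
  internal := by simp only [inDeg_eq_card, outDeg_eq_card]; decide

def splitReticNet : PhyloNet (Fin 15) where
  Arc := SplitReticArc
  root := 0
  X := {10, 11, 12, 13, 14}
  acyclic := acyclic_of_arc_lt _ (by decide)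
  reach := reflTransGen_of_arc_lt _ _ (by decide) (by decide)
  root_out := by rw [outDeg_eq_card]; decide
  leaf_iff := by simp only [outDeg_eq_card]; decide
  leaf_in := by simp only [inDeg_eq_card]; decide
  internal := by simp only [inDeg_eq_card, outDeg_eq_card]; decide

def mergeSplitRetic (v : Fin 15) : Fin 13 :=
  if h : v.val ≤ 7 then ⟨v, by omega⟩ else if v.val ≤ 9 then 7 else ⟨v - 2, by omega⟩

def supportTreeArcs : List (Fin 13 × Fin 13) :=
  [(0,1),(0,2),(1,3),(1,4),(2,5),(2,6),(3,7),(3,8),(4,9),(5,10),(6,11),(7,12)]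

def SupportTreeArc (u v : Fin 13) : Prop := (u, v) ∈ supportTreeArcs

instance : DecidableRel SupportTreeArc := fun u v => by unfold SupportTreeArc; infer_instance

lemma quadReticNet_isSupportTree : IsSupportTree quadReticNet SupportTreeArc := by
  refine ⟨⟨?_, ?_, ?_⟩, ?_⟩
  · show ∀ u v, SupportTreeArc u v → QuadReticArc u v
    decide
  · simp only [inDeg_eq_card]
    decide
  · simp only [inDeg_eq_card]
    decide
  · simp only [outDeg_eq_card]
    decide

lemma splitReticNet_isBinRefinement :
    IsBinRefinement splitReticNet quadReticNet mergeSplitRetic := by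
  refine ⟨?_, by decide, rfl, by decide, ?_, ?_, ?_⟩
  · show ∀ v, inDeg SplitReticArc v ≤ 2 ∧ outDeg SplitReticArc v ≤ 2
    simp only [inDeg_eq_card, outDeg_eq_card]
    decide
  · intro a ha b hb
    revert a b
    decide
  · show ∀ u v, QuadReticArc u v ↔ ∃ u' v', mergeSplitRetic u' = u ∧ mergeSplitRetic v' = v ∧
      SplitReticArc u' v' ∧ mergeSplitRetic u' ≠ mergeSplitRetic v'
    decide
  · intro a b hab
    let hub : Fin 15 → Fin 15 := fun v => if v = 7 ∨ v = 8 then 9 else v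
    refine reflTransGen_of_hub_eq hub ?_ ?_
    · show ∀ a, a = hub a ∨
        ((SplitReticArc a (hub a) ∨ SplitReticArc (hub a) a) ∧
          mergeSplitRetic a = mergeSplitRetic (hub a)) ∧
        ((SplitReticArc (hub a) a ∨ SplitReticArc a (hub a)) ∧
          mergeSplitRetic (hub a) = mergeSplitRetic a)
      decide
    · revert a b
      decide

lemma splitReticNet_not_treeBased : ¬ TreeBased splitReticNet :=
  not_treeBased_of_common_only_child splitReticNet (u := 7) (w := 8) (v := 9) (by decide)
    (by decide) (by decide) (show ∀ x, SplitReticArc 7 x → x = 9 by decide)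
    (show ∀ x, SplitReticArc 8 x → x = 9 by decide)

end Example

/-- there is a tree-based network having a binary refinement that is
not tree-based. -/
theorem stmt10 :
    ∃ (V : Type) (i1 : Fintype V) (i2 : DecidableEq V) (N : @PhyloNet V i1 i2),
      @TreeBased V i1 i2 N ∧
      ∃ (V' : Type) (j1 : Fintype V') (j2 : DecidableEq V')
        (N' : @PhyloNet V' j1 j2) (φ : V' → V),
        @IsBinRefinement V i1 i2 V' j1 j2 N' N φ ∧ ¬ @TreeBased V' j1 j2 N' :=
  ⟨Fin 13, inferInstance, inferInstance, quadReticNet, ⟨_, quadReticNet_isSupportTree⟩,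
    Fin 15, inferInstance, inferInstance, splitReticNet, mergeSplitRetic,
    splitReticNet_isBinRefinement, splitReticNet_not_treeBased⟩
end
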